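/- Let Φ be a Poisson random measure on C_0 with intensity μ, η = max(Φ), and K ⊆ T closed. The K-extremal point measure Φ_K^+ is almost surely finite if and only if either (i) μ(C_0) < ∞, or (ii) μ(C_0) = ∞ and inf_{t∈K} η(t) > 0 almost surely. -/

import Mathlib

open MeasureTheory Set ENNReal

noncomputable section

/-- The set of atoms of a point measure. -/
def atomsOf {α : Type*} [MeasurableSpace α] (M : Measure α) : Set α := {f | M {f} ≠ 0}

/-- Pointwise maximum function `max(M)(t) = max {f t : f atom of M}`. -/
def maxM {T : Type*} [TopologicalSpace T] [MeasurableSpace C(T, ℝ)]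
    (M : Measure C(T, ℝ)) (t : T) : ℝ :=
  sSup ((fun f : C(T, ℝ) => f t) '' atomsOf M)

/-- `M` belongs to `M_p(C_0)`: a point measure on nonnegative nonzero continuous
functions, with finitely many atoms (with multiplicity) of norm `> ε` for every `ε > 0`. -/
def IsMp {T : Type*} [MetricSpace T] [CompactSpace T] [MeasurableSpace C(T, ℝ)]
    (M : Measure C(T, ℝ)) : Prop :=
  ∃ (c : ℕ → ℕ) (φ : ℕ → C(T, ℝ)),
    M = Measure.sum (fun n => (c n : ℝ≥0∞) • Measure.dirac (φ n)) ∧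
    (∀ n, c n ≠ 0 → 0 ≤ φ n ∧ φ n ≠ 0) ∧
    (∀ ε : ℝ, 0 < ε → {n | c n ≠ 0 ∧ ε < ‖φ n‖}.Finite)

/-- `Φ` is a Poisson random measure on `α` with intensity `μ`, under `P`. -/
def IsPoissonPM {Ω : Type*} [MeasurableSpace Ω] {α : Type*} [MeasurableSpace α]
    (P : Measure Ω) (Φ : Ω → Measure α) (μ : Measure α) : Prop :=
  (∀ A : Set α, MeasurableSet A → Measurable fun ω => Φ ω A) ∧
  (∀ A : Set α, MeasurableSet A → μ A ≠ ⊤ → ∀ n : ℕ,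
      P {ω | Φ ω A = n} =
        ENNReal.ofReal (Real.exp (-(μ A).toReal) * (μ A).toReal ^ n / n.factorial)) ∧
  ∀ (m : ℕ) (A : Fin m → Set α), (∀ i, MeasurableSet (A i)) →
      Pairwise (Function.onFun Disjoint A) →
      ProbabilityTheory.iIndepFun (fun i ω => Φ ω (A i)) P

/-- `exp(-x)` for extended nonnegative `x`. -/
def Eexp (x : ℝ≥0∞) : ℝ≥0∞ :=
  if x = ⊤ then 0 else ENNReal.ofReal (Real.exp (-x.toReal))

/-! If `μ(C_0) < ∞`, the total mass of `Φ` is Poisson, hence a.s. finite. If `μ(C_0) = ∞`, the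
sets `{‖f‖ > 1/(k+1)}` have finite but unbounded intensity, so `Φ` a.s. has infinitely many atoms.
Then `η = max Φ`, a supremum of continuous functions, is lower semicontinuous and attains its
infimum over the compact set `K` at some `t₀`. If that infimum is `0`, every atom `f ≥ 0` satisfies
`η t₀ ≤ f t₀`, so all of the infinitely many atoms are `K`-extremal; if it is `ε > 0`, every
`K`-extremal atom has norm at least `ε`, and there are only finitely many such atoms. -/

open Filter Topology ProbabilityTheory
open scoped NNReal

lemma tendsto_poissonMeasure_Iic_atTop (N : ℕ) :
    Tendsto (fun r : ℝ≥0 => poissonMeasure r (Iic N)) atTop (𝓝 0) := by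
  have hterm (n : ℕ) : Tendsto (fun r : ℝ≥0 => ENNReal.ofReal (Real.exp (-r) * r ^ n / n.factorial))
      atTop (𝓝 0) := by
    have h := ((Real.tendsto_pow_mul_exp_neg_atTop_nhds_zero n).comp
      (NNReal.tendsto_coe_atTop.2 tendsto_id)).div_const (n.factorial : ℝ)
    rw [zero_div] at h
    simpa [mul_comm] using ENNReal.tendsto_ofReal h
  simpa [← Finset.coe_Iic, ← sum_measure_singleton, poissonMeasure_singleton] using
    tendsto_finsetSum (Finset.Iic N) fun n _ => hterm n

namespace IsPoissonPM

variable {Ω α : Type*} [MeasurableSpace Ω] [MeasurableSpace α] {P : Measure Ω}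
  {Φ : Ω → Measure α} {μ : Measure α} {A : Set α}

lemma measure_eq_natCast (hP : IsPoissonPM P Φ μ) (hA : MeasurableSet A) (hμA : μ A ≠ ⊤)
    (n : ℕ) : P {ω | Φ ω A = n} = poissonMeasure (μ A).toNNReal {n} := by
  rw [hP.2.1 A hA hμA n, poissonMeasure_singleton, ENNReal.coe_toNNReal_eq_toReal]

lemma ae_exists_natCast_eq [IsProbabilityMeasure P] (hP : IsPoissonPM P Φ μ)
    (hA : MeasurableSet A) (hμA : μ A ≠ ⊤) : ∀ᵐ ω ∂P, ∃ n : ℕ, Φ ω A = n := by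
  have hmeas (n : ℕ) : MeasurableSet {ω | Φ ω A = n} := hP.1 A hA (measurableSet_singleton _)
  have hdisj : Pairwise (Function.onFun Disjoint fun n : ℕ => {ω | Φ ω A = n}) := fun m n hmn =>
    Set.disjoint_left.2 fun ω hm hn => hmn (by exact_mod_cast (hm.symm.trans hn : _))
  rw [ae_iff_measure_eq]
  · simp only [ofPred_exists, measure_univ, measure_iUnion hdisj hmeas,
      hP.measure_eq_natCast hA hμA]
    simpa using Measure.tsum_indicator_apply_singleton (poissonMeasure (μ A).toNNReal) univ
      MeasurableSet.univ
  · simpa only [ofPred_exists] using (MeasurableSet.iUnion hmeas).nullMeasurableSet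

lemma measure_le_natCast_le [IsProbabilityMeasure P] (hP : IsPoissonPM P Φ μ)
    (hA : MeasurableSet A) (hμA : μ A ≠ ⊤) (N : ℕ) :
    P {ω | Φ ω A ≤ N} ≤ poissonMeasure (μ A).toNNReal (Iic N) := by
  have hsub : {ω | Φ ω A ≤ N} ≤ᵐ[P] ⋃ n ∈ Finset.Iic N, {ω | Φ ω A = n} := by
    filter_upwards [hP.ae_exists_natCast_eq hA hμA] with ω ⟨n, hn⟩ (hle : Φ ω A ≤ N)
    rw [hn, Nat.cast_le] at hle
    exact mem_iUnion₂.2 ⟨n, Finset.mem_Iic.2 hle, hn⟩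
  calc P {ω | Φ ω A ≤ N} ≤ ∑ n ∈ Finset.Iic N, P {ω | Φ ω A = n} :=
        (measure_mono_ae hsub).trans (measure_biUnion_finset_le _ _)
    _ = poissonMeasure (μ A).toNNReal (Iic N) := by
        simp [hP.measure_eq_natCast hA hμA, ← Finset.coe_Iic]

lemma ae_eq_top [IsProbabilityMeasure P] (hP : IsPoissonPM P Φ μ) {B : Set α}
    (A : ℕ → Set α) (hA : ∀ k, MeasurableSet (A k)) (hAB : ∀ k, A k ⊆ B)
    (hμA : ∀ k, μ (A k) ≠ ⊤) (hlim : Tendsto (fun k => μ (A k)) atTop (𝓝 ⊤)) :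
    ∀ᵐ ω ∂P, Φ ω B = ⊤ := by
  have hrate : Tendsto (fun k => (μ (A k)).toNNReal) atTop atTop := by
    rw [← ENNReal.tendsto_coe_nhds_top]
    simpa [ENNReal.coe_toNNReal (hμA _)] using hlim
  have hnull (N : ℕ) : P {ω | Φ ω B ≤ N} = 0 := by
    refine le_antisymm (ge_of_tendsto' ((tendsto_poissonMeasure_Iic_atTop N).comp hrate)
      fun k => ?_) zero_le
    exact (measure_mono fun ω hω => (measure_mono (hAB k)).trans hω).trans
      (hP.measure_le_natCast_le (hA k) (hμA k) N)
  have hgt : ∀ᵐ ω ∂P, ∀ N : ℕ, (N : ℝ≥0∞) < Φ ω B :=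
    ae_all_iff.2 fun N => by simpa [ae_iff] using hnull N
  filter_upwards [hgt] with ω hω
  by_contra hne
  obtain ⟨N, hN⟩ := ENNReal.exists_nat_gt hne
  exact (hω N).not_gt hN

end IsPoissonPM

lemma tendsto_measure_norm_gt_one_div_atTop {E : Type*} [NormedAddCommGroup E]
    [MeasurableSpace E] [OpensMeasurableSpace E] (μ : Measure E) :
    Tendsto (fun k : ℕ => μ {f | 1 / ((k : ℝ) + 1) < ‖f‖}) atTop (𝓝 (μ {f | f ≠ 0})) := by
  have hunion : ⋃ k : ℕ, {f : E | 1 / ((k : ℝ) + 1) < ‖f‖} = {f | f ≠ 0} := by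
    ext f
    simp only [mem_iUnion, mem_ofPred_eq, ← norm_pos_iff]
    exact ⟨fun ⟨k, hk⟩ => Nat.one_div_pos_of_nat.trans hk, exists_nat_one_div_lt⟩
  rw [← hunion]
  refine tendsto_measure_iUnion_atTop fun k l hkl => ?_
  intro f (hf : 1 / ((k : ℝ) + 1) < ‖f‖)
  exact (Nat.one_div_le_one_div hkl).trans_lt hf

lemma atomsOf_sum_smul_dirac {α : Type*} [MeasurableSpace α] [MeasurableSingletonClass α]
    (c : ℕ → ℕ) (φ : ℕ → α) :
    atomsOf (Measure.sum fun n => (c n : ℝ≥0∞) • Measure.dirac (φ n)) =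
      {x | ∃ n, c n ≠ 0 ∧ φ n = x} := by
  ext x
  simp [atomsOf, ENNReal.tsum_eq_zero]

def extremalSet {T : Type*} [TopologicalSpace T] [MeasurableSpace C(T, ℝ)]
    (M : Measure C(T, ℝ)) (K : Set T) : Set C(T, ℝ) :=
  {f | ∃ t ∈ K, maxM M t ≤ f t}

namespace IsMp

variable {T : Type*} [MetricSpace T] [CompactSpace T] [MeasurableSpace C(T, ℝ)]
  [OpensMeasurableSpace C(T, ℝ)] {M : Measure C(T, ℝ)} {K : Set T}

lemma nonneg_of_mem_atomsOf (hM : IsMp M) {f : C(T, ℝ)} (hf : f ∈ atomsOf M) : 0 ≤ f := by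
  obtain ⟨c, φ, rfl, hpos, -⟩ := hM
  rw [atomsOf_sum_smul_dirac] at hf
  obtain ⟨n, hn, rfl⟩ := hf
  exact (hpos n hn).1

lemma bddAbove_eval_atomsOf (hM : IsMp M) (t : T) :
    BddAbove ((fun f : C(T, ℝ) => f t) '' atomsOf M) := by
  obtain ⟨c, φ, rfl, -, hfin⟩ := hM
  obtain ⟨b, hb⟩ := ((hfin 1 one_pos).image fun n => φ n t).bddAbove
  refine ⟨max b 1, ?_⟩
  rintro _ ⟨_, hf, rfl⟩
  rw [atomsOf_sum_smul_dirac] at hf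
  obtain ⟨n, hn, rfl⟩ := hf
  by_cases hbig : 1 < ‖φ n‖
  · exact le_max_of_le_left (hb ⟨n, ⟨hn, hbig⟩, rfl⟩)
  · exact le_max_of_le_right (((φ n).apply_le_norm t).trans (not_lt.1 hbig))

lemma lowerSemicontinuous_maxM (hM : IsMp M) : LowerSemicontinuous (maxM M) := by
  have hsup : maxM M = fun t => ⨆ f : atomsOf M, (f : C(T, ℝ)) t := funext fun t => sSup_image'
  rw [hsup]
  refine lowerSemicontinuous_ciSup (fun t => ?_) fun f => f.1.continuous.lowerSemicontinuous
  simpa only [image_eq_range] using hM.bddAbove_eval_atomsOf t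

lemma measure_norm_gt_lt_top (hM : IsMp M) {ε : ℝ} (hε : 0 < ε) :
    M {f | ε < ‖f‖} < ⊤ := by
  obtain ⟨c, φ, rfl, -, hfin⟩ := hM
  have hmeas : MeasurableSet {f : C(T, ℝ) | ε < ‖f‖} :=
    measurableSet_lt measurable_const continuous_norm.measurable
  rw [Measure.sum_apply _ hmeas, tsum_eq_sum (s := (hfin ε hε).toFinset)]
  · refine ENNReal.sum_lt_top.2 fun n _ => ?_
    simp only [Measure.smul_apply, Measure.dirac_apply' _ hmeas, indicator]
    split_ifs <;> simp
  · intro n hn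
    simpa [Measure.dirac_apply' _ hmeas, or_iff_not_imp_left] using hn

lemma measure_compl_eq_zero (hM : IsMp M) {S : Set C(T, ℝ)} (hS : MeasurableSet S)
    (hatoms : atomsOf M ⊆ S) : M Sᶜ = 0 := by
  obtain ⟨c, φ, rfl, -, -⟩ := hM
  rw [atomsOf_sum_smul_dirac] at hatoms
  rw [Measure.sum_apply _ hS.compl, ENNReal.tsum_eq_zero]
  intro n
  by_cases hn : c n = 0
  · simp [hn]
  · simp [Measure.dirac_apply' _ hS.compl, hatoms ⟨n, hn, rfl⟩]

lemma measure_extremalSet_lt_top (hM : IsMp M) {ε : ℝ} (hε : 0 < ε)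
    (hεK : ∀ t ∈ K, ε ≤ maxM M t) : M (extremalSet M K) < ⊤ := by
  have hsub : extremalSet M K ⊆ {f | ε / 2 < ‖f‖} := fun f ⟨t, ht, hf⟩ => by
    change ε / 2 < ‖f‖
    linarith [hεK t ht, f.apply_le_norm t]
  exact (measure_mono hsub).trans_lt (hM.measure_norm_gt_lt_top (half_pos hε))

lemma measure_extremalSet_eq_top (hM : IsMp M) (hK : IsCompact K)
    (hinf : ¬∃ ε : ℝ, 0 < ε ∧ ∀ t ∈ K, ε ≤ maxM M t) (huniv : M univ = ⊤) :
    M (extremalSet M K) = ⊤ := by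
  have hKne : K.Nonempty := by
    by_contra hK_empty
    exact hinf ⟨1, one_pos, by simp [not_nonempty_iff_eq_empty.1 hK_empty]⟩
  obtain ⟨t₀, ht₀, hmin⟩ :=
    (hM.lowerSemicontinuous_maxM.lowerSemicontinuousOn K).exists_isMinOn hKne hK
  have hzero : maxM M t₀ ≤ 0 := by
    by_contra! hpos
    exact hinf ⟨_, hpos, fun t ht => hmin ht⟩
  set S := {f : C(T, ℝ) | 0 ≤ f t₀}
  have hS : MeasurableSet S :=
    measurableSet_le measurable_const (continuous_eval_const t₀).measurable
  have hSK : S ⊆ extremalSet M K := fun f hf => ⟨t₀, ht₀, hzero.trans hf⟩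
  have hnull : M Sᶜ = 0 :=
    hM.measure_compl_eq_zero hS fun f hf => hM.nonneg_of_mem_atomsOf hf t₀
  refine top_le_iff.1 ?_
  calc ⊤ = M univ := huniv.symm
    _ ≤ M S + M Sᶜ := measure_univ_le_add_compl S
    _ ≤ M (extremalSet M K) := by rw [hnull, add_zero]; exact measure_mono hSK

end IsMp

theorem extremal_finite_iff_general {T : Type*} [MetricSpace T] [CompactSpace T]
    [MeasurableSpace C(T, ℝ)] [BorelSpace C(T, ℝ)]
    {Ω : Type*} [MeasurableSpace Ω] (P : Measure Ω) [IsProbabilityMeasure P]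
    (μ : Measure C(T, ℝ)) (hμ : ∀ ε : ℝ, 0 < ε → μ {f : C(T, ℝ) | ε < ‖f‖} ≠ ⊤)
    (hμ0 : ∀ᵐ f ∂μ, 0 ≤ f ∧ f ≠ 0)
    (Φ : Ω → Measure C(T, ℝ)) (hP : IsPoissonPM P Φ μ) (hMp : ∀ ω, IsMp (Φ ω))
    (K : Set T) (hK : IsClosed K)
    (Φp : Ω → Measure C(T, ℝ))
    (hΦp : ∀ ω, Φp ω = (Φ ω).restrict {f : C(T, ℝ) | ∃ t ∈ K, maxM (Φ ω) t ≤ f t}) :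
    (∀ᵐ ω ∂P, Φp ω Set.univ < ⊤) ↔
      (μ Set.univ < ⊤ ∨
        (μ Set.univ = ⊤ ∧ ∀ᵐ ω ∂P, ∃ ε : ℝ, 0 < ε ∧ ∀ t ∈ K, ε ≤ maxM (Φ ω) t)) := by
  have hΦp_univ (ω : Ω) : Φp ω univ = Φ ω (extremalSet (Φ ω) K) := by
    rw [hΦp, Measure.restrict_apply_univ, extremalSet]
  simp only [hΦp_univ]
  constructor
  · intro hfin
    refine (eq_top_or_lt_top (μ univ)).symm.imp id fun hμ_top => ⟨hμ_top, ?_⟩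
    have hμ_ne_zero : μ {f | f ≠ 0} = ⊤ :=
      (measure_congr (eventuallyEq_univ.2 (hμ0.mono fun _ hf => hf.2))).trans hμ_top
    have hΦ_top : ∀ᵐ ω ∂P, Φ ω univ = ⊤ :=
      hP.ae_eq_top _ (fun _ => measurableSet_lt measurable_const continuous_norm.measurable)
        (fun _ => subset_univ _) (fun _ => hμ _ Nat.one_div_pos_of_nat)
        (hμ_ne_zero ▸ tendsto_measure_norm_gt_one_div_atTop μ)
    filter_upwards [hfin, hΦ_top] with ω hω hω_top
    by_contra hinf
    exact hω.ne ((hMp ω).measure_extremalSet_eq_top hK.isCompact hinf hω_top)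
  · rintro (hμ_fin | ⟨-, hpos⟩)
    · filter_upwards [hP.ae_exists_natCast_eq MeasurableSet.univ hμ_fin.ne] with ω ⟨n, hn⟩
      exact (measure_mono (subset_univ _)).trans_lt (hn ▸ ENNReal.natCast_lt_top n)
    · filter_upwards [hpos] with ω ⟨ε, hε, hεK⟩
      exact (hMp ω).measure_extremalSet_lt_top hε hεK

/-- Proposition 1: `Φ_K^+` is a.s. finite iff either `μ(C_0) < ∞`,
or `μ(C_0) = ∞` and `inf_{t ∈ K} η(t) > 0` almost surely. -/
theorem extremal_finite_iff {T : Type*} [MetricSpace T] [CompactSpace T]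
    [MeasurableSpace C(T, ℝ)] [BorelSpace C(T, ℝ)]
    {Ω : Type*} [MeasurableSpace Ω] (P : Measure Ω) [IsProbabilityMeasure P]
    (μ : Measure C(T, ℝ)) (hμ : ∀ ε : ℝ, 0 < ε → μ {f : C(T, ℝ) | ε < ‖f‖} ≠ ⊤)
    (hμ0 : ∀ᵐ f ∂μ, 0 ≤ f ∧ f ≠ 0)
    (Φ : Ω → Measure C(T, ℝ)) (hP : IsPoissonPM P Φ μ) (hMp : ∀ ω, IsMp (Φ ω))
    (K : Set T) (hK : IsClosed K) (hKne : K.Nonempty)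
    (Φp : Ω → Measure C(T, ℝ))
    (hΦp : ∀ ω, Φp ω = (Φ ω).restrict {f : C(T, ℝ) | ∃ t ∈ K, maxM (Φ ω) t ≤ f t}) :
    (∀ᵐ ω ∂P, Φp ω Set.univ < ⊤) ↔
      (μ Set.univ < ⊤ ∨
        (μ Set.univ = ⊤ ∧ ∀ᵐ ω ∂P, ∃ ε : ℝ, 0 < ε ∧ ∀ t ∈ K, ε ≤ maxM (Φ ω) t)) :=
  extremal_finite_iff_general P μ hμ hμ0 Φ hP hMp K hK Φp hΦp
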